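/- arXiv:2310.00775 — 3 statements merged into one kernel-verified Lean document; each statement's English description precedes it below -/
import Mathlib

section
/- Let X_min ≤ 0 ≤ X_max be real numbers and let x_a, x_b ∈ ℝ. Then the following are equivalent: (i) X_min ≤ x_a ≤ X_max, X_min ≤ x_b ≤ X_max, and x_a · x_b ≥ 0; (ii) there exist z_ch, z_dis ∈ {0, 1} (real-valued binaries) with z_ch + z_dis = 1, x_a ≥ z_ch · X_min, x_a ≤ z_dis · X_max, x_b ≥ z_ch · X_min, and x_b ≤ z_dis · X_max. Hence the disjunctive linearization with two binary variables is an exact reformulation of the bilinear constraint x_a · x_b ≥ 0 on the box. -/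
/-- The disjunctive linearization with two binary variables is an exact
reformulation of the bilinear constraint `x_a * x_b ≥ 0` on the box. -/
theorem stmt1 (Xmin Xmax xa xb : ℝ) (h1 : Xmin ≤ 0) (h2 : 0 ≤ Xmax) :
    (Xmin ≤ xa ∧ xa ≤ Xmax ∧ Xmin ≤ xb ∧ xb ≤ Xmax ∧ xa * xb ≥ 0) ↔
      ∃ zch zdis : ℝ, (zch = 0 ∨ zch = 1) ∧ (zdis = 0 ∨ zdis = 1) ∧
        zch + zdis = 1 ∧ xa ≥ zch * Xmin ∧ xa ≤ zdis * Xmax ∧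
        xb ≥ zch * Xmin ∧ xb ≤ zdis * Xmax := by
  constructor
  · rintro ⟨ha1, ha2, hb1, hb2, hprod⟩
    rcases mul_nonneg_iff.mp hprod with ⟨hxa, hxb⟩ | ⟨hxa, hxb⟩
    · exact ⟨0, 1, Or.inl rfl, Or.inr rfl, by ring, by simpa using hxa,
        by simpa using ha2, by simpa using hxb, by simpa using hb2⟩
    · exact ⟨1, 0, Or.inr rfl, Or.inl rfl, by ring, by simpa using ha1,
        by simpa using hxa, by simpa using hb1, by simpa using hxb⟩
  · rintro ⟨zch, zdis, hch, hdis, hsum, ha1, ha2, hb1, hb2⟩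
    rcases hch with rfl | rfl
    · have hd : zdis = 1 := by linarith
      subst hd
      simp only [zero_mul, one_mul] at ha1 ha2 hb1 hb2
      exact ⟨le_trans h1 ha1, ha2, le_trans h1 hb1, hb2, mul_nonneg ha1 hb1⟩
    · have hd : zdis = 0 := by linarith
      subst hd
      simp only [one_mul, zero_mul] at ha1 ha2 hb1 hb2
      exact ⟨ha1, le_trans ha2 h2, hb1, le_trans hb2 h2,
        mul_nonneg_iff.mpr (Or.inr ⟨ha2, hb2⟩)⟩
end

section
/- Let N ∈ ℕ, let X_min ≤ 0 ≤ X_max, b_min ≤ b_0 ≤ b_max be reals, let η_ch, η_dis ∈ (0,1], and let P_b^A, P_s^A, P̃_b^B, P̃_s^B : Fin N → ℝ be price sequences satisfying P_b^A(i)/η_ch ≥ P_s^A(i)·η_dis and P̃_b^B(i)/η_ch ≥ P̃_s^B(i)·η_dis for every i. Define the original feasible set F = { (x_a, x_b) : Fin N → ℝ × Fin N → ℝ such that for every i: X_min ≤ x_a(i) ≤ X_max, X_min ≤ x_b(i) ≤ X_max, X_min ≤ x_a(i)+x_b(i) ≤ X_max, x_a(i)·x_b(i) ≥ 0, and b_min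 ≤ b_0 + Σ_{j ≤ i}(x_a(j)+x_b(j)) ≤ b_max }, with original objective J(x_a,x_b) = Σᵢ [ max(P_b^A(i)·x_a(i)/η_ch, P_s^A(i)·η_dis·x_a(i)) + max(P̃_b^B(i)·x_b(i)/η_ch, P̃_s^B(i)·η_dis·x_b(i)) ]. Define the MILP feasible set G consisting of tuples (x_a, x_b, t_a, t_b, z_ch, z_dis) where t_a, t_b : Fin N → ℝ, z_ch, z_dis : Fin N → {0,1}, satisfying for every i: P_b^A(i)·x_a(i)/η_ch ≤ t_a(i), P_s^A(i)·η_dis·x_a(i) ≤ t_a(i), P̃_b^B(i)·x_b(i)/η_ch ≤ t_b(i), P̃_s^B(i)·η_dis·x_b(i) ≤ t_b(i), X_min ≤ x_a(i) ≤ X_max, X_min ≤ x_b(i) ≤ X_max, X_min ≤ x_a(i)+x_b(i) ≤ X_max, b_min ≤ b_0 + Σ_{j ≤ i}(x_a(j)+x_b(j)) ≤ b_max, x_a(i) ≥ z_ch(i)·X_min, x_a(i) ≤ z_dis(i)·X_max, x_b(i) ≥ z_ch(i)·X_min, x_b(i) ≤ z_dis(i)·X_max, and z_ch(i)+z_dis(i)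 = 1. Then the infimum of J over F equals the infimum of Σᵢ (t_a(i)+t_b(i)) over G; i.e., the mixed integer linear program P_MILP is an exact reformulation of the original nonconvex problem P_orig. -/
/-- If `S₁ ⊆ S₂` and every element of `S₂` dominates some element of `S₁`,
then the two (real, conditional) infima coincide. -/
lemma sInf_eq_of_subset_of_dom (S₁ S₂ : Set ℝ) (hsub : S₁ ⊆ S₂)
    (hdom : ∀ y ∈ S₂, ∃ x ∈ S₁, x ≤ y) : sInf S₁ = sInf S₂ := by
  rcases S₂.eq_empty_or_nonempty with h | h
  · have h1 : S₁ = ∅ := Set.eq_empty_of_subset_empty (h ▸ hsub)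
    rw [h, h1]
  · by_cases hb : BddBelow S₂
    · have hb1 : BddBelow S₁ := hb.mono hsub
      obtain ⟨y, hy⟩ := h
      obtain ⟨x, hx, _⟩ := hdom y hy
      apply le_antisymm
      · refine le_csInf ⟨y, hy⟩ fun z hz => ?_
        obtain ⟨x', hx', hle⟩ := hdom z hz
        exact (csInf_le hb1 hx').trans hle
      · exact csInf_le_csInf hb ⟨x, hx⟩ hsub
    · have hb1 : ¬ BddBelow S₁ := by
        rintro ⟨c, hc⟩
        apply hb
        refine ⟨c, fun y hy => ?_⟩
        obtain ⟨x, hx, hle⟩ := hdom y hy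
        exact (hc hx).trans hle
      rw [Real.sInf_of_not_bddBelow hb, Real.sInf_of_not_bddBelow hb1]

/-- The mixed integer linear program `P_MILP` (epigraph variables plus the
disjunctive binary linearization) is an exact reformulation of the original
nonconvex inter-regional arbitrage problem `P_orig`: the two optimal values
coincide. -/
theorem stmt6 (N : ℕ) (Xmin Xmax bmin b0 bmax ηch ηdis : ℝ)
    (hX1 : Xmin ≤ 0) (hX2 : 0 ≤ Xmax) (hb1 : bmin ≤ b0) (hb2 : b0 ≤ bmax)
    (hch : ηch ∈ Set.Ioc (0 : ℝ) 1) (hdis : ηdis ∈ Set.Ioc (0 : ℝ) 1)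
    (PbA PsA PbB PsB : Fin N → ℝ)
    (hA : ∀ i, PsA i * ηdis ≤ PbA i / ηch)
    (hB : ∀ i, PsB i * ηdis ≤ PbB i / ηch)
    (F : Set ((Fin N → ℝ) × (Fin N → ℝ)))
    (hF : F = {p | ∀ i, Xmin ≤ p.1 i ∧ p.1 i ≤ Xmax ∧ Xmin ≤ p.2 i ∧ p.2 i ≤ Xmax ∧
      Xmin ≤ p.1 i + p.2 i ∧ p.1 i + p.2 i ≤ Xmax ∧ p.1 i * p.2 i ≥ 0 ∧
      bmin ≤ b0 + ∑ j ∈ Finset.Iic i, (p.1 j + p.2 j) ∧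
      b0 + ∑ j ∈ Finset.Iic i, (p.1 j + p.2 j) ≤ bmax})
    (J : (Fin N → ℝ) × (Fin N → ℝ) → ℝ)
    (hJ : J = fun p => ∑ i, (max (PbA i * p.1 i / ηch) (PsA i * ηdis * p.1 i) +
      max (PbB i * p.2 i / ηch) (PsB i * ηdis * p.2 i)))
    -- a point of `G` is `((x_a, x_b), (t_a, t_b), (z_ch, z_dis))`
    (G : Set (((Fin N → ℝ) × (Fin N → ℝ)) × ((Fin N → ℝ) × (Fin N → ℝ)) ×
      ((Fin N → ℝ) × (Fin N → ℝ))))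
    (hG : G = {q | ∀ i,
      (q.2.2.1 i = 0 ∨ q.2.2.1 i = 1) ∧ (q.2.2.2 i = 0 ∨ q.2.2.2 i = 1) ∧
      PbA i * q.1.1 i / ηch ≤ q.2.1.1 i ∧ PsA i * ηdis * q.1.1 i ≤ q.2.1.1 i ∧
      PbB i * q.1.2 i / ηch ≤ q.2.1.2 i ∧ PsB i * ηdis * q.1.2 i ≤ q.2.1.2 i ∧
      Xmin ≤ q.1.1 i ∧ q.1.1 i ≤ Xmax ∧ Xmin ≤ q.1.2 i ∧ q.1.2 i ≤ Xmax ∧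
      Xmin ≤ q.1.1 i + q.1.2 i ∧ q.1.1 i + q.1.2 i ≤ Xmax ∧
      bmin ≤ b0 + ∑ j ∈ Finset.Iic i, (q.1.1 j + q.1.2 j) ∧
      b0 + ∑ j ∈ Finset.Iic i, (q.1.1 j + q.1.2 j) ≤ bmax ∧
      q.1.1 i ≥ q.2.2.1 i * Xmin ∧ q.1.1 i ≤ q.2.2.2 i * Xmax ∧
      q.1.2 i ≥ q.2.2.1 i * Xmin ∧ q.1.2 i ≤ q.2.2.2 i * Xmax ∧
      q.2.2.1 i + q.2.2.2 i = 1}) :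
    sInf (J '' F) = sInf ((fun q => ∑ i, (q.2.1.1 i + q.2.1.2 i)) '' G) := by
  apply sInf_eq_of_subset_of_dom
  · -- J '' F ⊆ image of G
    rintro v ⟨p, hp, rfl⟩
    rw [hF] at hp
    refine ⟨⟨p, ⟨fun i => max (PbA i * p.1 i / ηch) (PsA i * ηdis * p.1 i),
        fun i => max (PbB i * p.2 i / ηch) (PsB i * ηdis * p.2 i)⟩,
        ⟨fun i => if 0 ≤ p.1 i ∧ 0 ≤ p.2 i then (0:ℝ) else 1,
         fun i => if 0 ≤ p.1 i ∧ 0 ≤ p.2 i then (1:ℝ) else 0⟩⟩, ?_, ?_⟩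
    · rw [hG]
      intro i
      obtain ⟨h1, h2, h3, h4, h5, h6, h7, h8, h9⟩ := hp i
      by_cases hc : 0 ≤ p.1 i ∧ 0 ≤ p.2 i
      · simp only [if_pos hc, one_mul, zero_mul]
        exact ⟨Or.inl trivial, Or.inr trivial, le_max_left _ _, le_max_right _ _,
          le_max_left _ _, le_max_right _ _, h1, h2, h3, h4, h5, h6, h8, h9,
          hc.1, h2, hc.2, h4, by norm_num⟩
      · -- both nonpositive
        have hnp : p.1 i ≤ 0 ∧ p.2 i ≤ 0 := by
          rcases mul_nonneg_iff.mp h7 with h | h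
          · exact absurd h hc
          · exact h
        simp only [if_neg hc, one_mul, zero_mul]
        exact ⟨Or.inr trivial, Or.inl trivial, le_max_left _ _, le_max_right _ _,
          le_max_left _ _, le_max_right _ _, h1, h2, h3, h4, h5, h6, h8, h9,
          h1, hnp.1, h3, hnp.2, by norm_num⟩
    · rw [hJ]
  · -- domination
    rintro v ⟨q, hq, rfl⟩
    rw [hG] at hq
    refine ⟨J q.1, ⟨q.1, ?_, rfl⟩, ?_⟩
    · rw [hF]
      intro i
      obtain ⟨h1, h2, h3, h4, h5, h6, h7, h8, h9, h10, h11, h12, h13, h14,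
        h15, h16, h17, h18, h19⟩ := hq i
      refine ⟨h7, h8, h9, h10, h11, h12, ?_, h13, h14⟩
      rcases h1 with hz | hz
      · -- z_ch = 0, so z_dis = 1 and both nonneg
        have hd : q.2.2.2 i = 1 := by linarith [h19]
        rw [hz, zero_mul] at h15 h17
        exact mul_nonneg h15 h17
      · -- z_ch = 1, so z_dis = 0 and both nonpositive
        have hd : q.2.2.2 i = 0 := by linarith [h19]
        rw [hd, zero_mul] at h16 h18
        exact mul_nonneg_iff.mpr (Or.inr ⟨h16, h18⟩)
    · rw [hJ]
      refine Finset.sum_le_sum fun i _ => ?_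
      obtain ⟨h1, h2, h3, h4, h5, h6, _⟩ := hq i
      exact add_le_add (max_le h3 h4) (max_le h5 h6)
end

section
/- Let N ∈ ℕ, X_min ≤ 0 ≤ X_max, b_min ≤ b_0 ≤ b_max, η_ch, η_dis ∈ (0,1], and price sequences P_b^A, P_s^A, P̃_b^B, P̃_s^B : Fin N → ℝ. Let v_{K1} be the infimum of Σᵢ [ min(P_b^A(i), P̃_b^B(i))·max(x(i),0)/η_ch − max(P_s^A(i), P̃_s^B(i))·η_dis·max(−x(i),0) ] over all x : Fin N → ℝ with X_min ≤ x(i) ≤ X_max and b_min ≤ b_0 + Σ_{j ≤ i} x(j) ≤ b_max for all i. Let v_{K2} be the infimum of Σᵢ [ P_b^A(i)·max(x_a(i),0)/η_ch − P_s^A(i)·η_dis·max(−x_a(i),0) + P̃_b^B(i)·max(x_b(i),0)/η_ch − P̃_s^B(i)·η_dis·max(−x_b(i),0) ] over all (x_a, x_b) with, for every i: X_min ≤ x_a(i) ≤ X_max, X_min ≤ x_b(i) ≤ X_max, X_min ≤ x_a(i)+x_b(i) ≤ X_max, x_a(i)·x_b(i) ≥ 0, and b_min ≤ b_0 + Σ_{j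 ≤ i}(x_a(j)+x_b(j)) ≤ b_max. Then v_{K2} ≤ v_{K1}; i.e., the multi-market model K2 achieves at most the cost (at least the revenue) of the single-market-per-step model K1. -/
/-!
A K1 schedule `x` is reproduced in K2 by sending the whole of `x i` to whichever market quotes
the better price for the sign of `x i`, so every K1 value is a K2 value. Conversely, since
`x_a i` and `x_b i` have the same sign, their positive and negative parts add up, and the K1
schedule `x_a + x_b` trades at prices no worse than either market, so every K2 value is bounded
below by a K1 value. Two sets of reals that bound each other from below in this way have the
same `sInf`, even when empty or unbounded.
-/

open Finset

section ExchangeCost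

variable (ηch ηdis : ℝ)

noncomputable def exchangeCost (pb ps x : ℝ) : ℝ :=
  pb * max x 0 / ηch - ps * ηdis * max (-x) 0

variable {ηch ηdis}

lemma exchangeCost_of_nonneg (pb ps : ℝ) {x : ℝ} (hx : 0 ≤ x) :
    exchangeCost ηch ηdis pb ps x = pb * x / ηch := by
  simp [exchangeCost, hx]

lemma exchangeCost_of_nonpos (pb ps : ℝ) {x : ℝ} (hx : x ≤ 0) :
    exchangeCost ηch ηdis pb ps x = ps * ηdis * x := by
  simp [exchangeCost, hx]

lemma exchangeCost_zero (pb ps : ℝ) : exchangeCost ηch ηdis pb ps 0 = 0 :=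
  exchangeCost_of_nonneg pb ps le_rfl |>.trans (by simp)

lemma exchangeCost_min_max_le_add (hηch : 0 ≤ ηch) (hηdis : 0 ≤ ηdis)
    (pbA psA pbB psB : ℝ) {a b : ℝ} (hab : 0 ≤ a * b) :
    exchangeCost ηch ηdis (min pbA pbB) (max psA psB) (a + b) ≤
      exchangeCost ηch ηdis pbA psA a + exchangeCost ηch ηdis pbB psB b := by
  rcases mul_nonneg_iff.mp hab with ⟨ha, hb⟩ | ⟨ha, hb⟩
  · rw [exchangeCost_of_nonneg _ _ ha, exchangeCost_of_nonneg _ _ hb,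
      exchangeCost_of_nonneg _ _ (add_nonneg ha hb), ← add_div]
    have hA := mul_le_mul_of_nonneg_right (min_le_left pbA pbB) ha
    have hB := mul_le_mul_of_nonneg_right (min_le_right pbA pbB) hb
    exact div_le_div_of_nonneg_right (by linarith) hηch
  · rw [exchangeCost_of_nonpos _ _ ha, exchangeCost_of_nonpos _ _ hb,
      exchangeCost_of_nonpos _ _ (add_nonpos ha hb)]
    have hA := mul_le_mul_of_nonpos_right
      (mul_le_mul_of_nonneg_right (le_max_left psA psB) hηdis) ha
    have hB := mul_le_mul_of_nonpos_right
      (mul_le_mul_of_nonneg_right (le_max_right psA psB) hηdis) hb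
    linarith

lemma exchangeCost_min_max_eq_or (pbA psA pbB psB x : ℝ) :
    exchangeCost ηch ηdis (min pbA pbB) (max psA psB) x = exchangeCost ηch ηdis pbA psA x ∨
      exchangeCost ηch ηdis (min pbA pbB) (max psA psB) x = exchangeCost ηch ηdis pbB psB x := by
  rcases le_total 0 x with hx | hx
  · simp only [exchangeCost_of_nonneg _ _ hx]
    rcases min_choice pbA pbB with h | h <;> simp [h]
  · simp only [exchangeCost_of_nonpos _ _ hx]
    rcases max_choice psA psB with h | h <;> simp [h]

end ExchangeCost

section Models

variable {N : ℕ} (Xmin Xmax bmin b0 bmax ηch ηdis : ℝ) (PbA PsA PbB PsB : Fin N → ℝ)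

def feasibleK1 : Set (Fin N → ℝ) :=
  {x | ∀ i, Xmin ≤ x i ∧ x i ≤ Xmax ∧
    bmin ≤ b0 + ∑ j ∈ Iic i, x j ∧ b0 + ∑ j ∈ Iic i, x j ≤ bmax}

def feasibleK2 : Set ((Fin N → ℝ) × (Fin N → ℝ)) :=
  {p | ∀ i, Xmin ≤ p.1 i ∧ p.1 i ≤ Xmax ∧ Xmin ≤ p.2 i ∧ p.2 i ≤ Xmax ∧
    Xmin ≤ p.1 i + p.2 i ∧ p.1 i + p.2 i ≤ Xmax ∧ p.1 i * p.2 i ≥ 0 ∧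
    bmin ≤ b0 + ∑ j ∈ Iic i, (p.1 j + p.2 j) ∧ b0 + ∑ j ∈ Iic i, (p.1 j + p.2 j) ≤ bmax}

noncomputable def costK1 (x : Fin N → ℝ) : ℝ :=
  ∑ i, exchangeCost ηch ηdis (min (PbA i) (PbB i)) (max (PsA i) (PsB i)) (x i)

noncomputable def costK2 (p : (Fin N → ℝ) × (Fin N → ℝ)) : ℝ :=
  ∑ i, (exchangeCost ηch ηdis (PbA i) (PsA i) (p.1 i) +
    exchangeCost ηch ηdis (PbB i) (PsB i) (p.2 i))

variable {Xmin Xmax bmin b0 bmax ηch ηdis}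

lemma add_mem_feasibleK1 {p : (Fin N → ℝ) × (Fin N → ℝ)}
    (hp : p ∈ feasibleK2 Xmin Xmax bmin b0 bmax) :
    p.1 + p.2 ∈ feasibleK1 Xmin Xmax bmin b0 bmax := fun i ↦
  have ⟨_, _, _, _, hlo, hhi, _, hblo, hbhi⟩ := hp i
  ⟨hlo, hhi, hblo, hbhi⟩

lemma costK1_add_le_costK2 (hηch : 0 ≤ ηch) (hηdis : 0 ≤ ηdis) {p : (Fin N → ℝ) × (Fin N → ℝ)}
    (hp : ∀ i, 0 ≤ p.1 i * p.2 i) :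
    costK1 ηch ηdis PbA PsA PbB PsB (p.1 + p.2) ≤ costK2 ηch ηdis PbA PsA PbB PsB p :=
  sum_le_sum fun i _ ↦ exchangeCost_min_max_le_add hηch hηdis _ _ _ _ (hp i)

lemma exists_mem_feasibleK2_costK2_eq (hXmin : Xmin ≤ 0) (hXmax : 0 ≤ Xmax) {x : Fin N → ℝ}
    (hx : x ∈ feasibleK1 Xmin Xmax bmin b0 bmax) :
    ∃ p ∈ feasibleK2 Xmin Xmax bmin b0 bmax,
      costK2 ηch ηdis PbA PsA PbB PsB p = costK1 ηch ηdis PbA PsA PbB PsB x := by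
  classical
  let inA i := exchangeCost ηch ηdis (min (PbA i) (PbB i)) (max (PsA i) (PsB i)) (x i) =
    exchangeCost ηch ηdis (PbA i) (PsA i) (x i)
  let p : (Fin N → ℝ) × (Fin N → ℝ) :=
    (fun i ↦ if inA i then x i else 0, fun i ↦ if inA i then 0 else x i)
  have hsum : ∀ i, p.1 i + p.2 i = x i := fun i ↦ by
    by_cases h : inA i <;> simp [p, h]
  refine ⟨p, fun i ↦ ?_, sum_congr rfl fun i _ ↦ ?_⟩
  · obtain ⟨hlo, hhi, hblo, hbhi⟩ := hx i
    simp only [hsum]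
    by_cases h : inA i <;> simp [p, h, hlo, hhi, hblo, hbhi, hXmin, hXmax]
  · by_cases h : inA i
    · simpa [p, h, exchangeCost_zero] using h.symm
    · simp [p, h, exchangeCost_zero,
        (exchangeCost_min_max_eq_or (PbA i) (PsA i) (PbB i) (PsB i) (x i)).resolve_left h]

end Models

theorem stmt9_general (N : ℕ) (Xmin Xmax bmin b0 bmax ηch ηdis : ℝ)
    (hX1 : Xmin ≤ 0) (hX2 : 0 ≤ Xmax)
    (hch : ηch ∈ Set.Ioc (0 : ℝ) 1) (hdis : ηdis ∈ Set.Ioc (0 : ℝ) 1)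
    (PbA PsA PbB PsB : Fin N → ℝ)
    (F1 : Set (Fin N → ℝ))
    (hF1 : F1 = {x | ∀ i, Xmin ≤ x i ∧ x i ≤ Xmax ∧
      bmin ≤ b0 + ∑ j ∈ Finset.Iic i, x j ∧ b0 + ∑ j ∈ Finset.Iic i, x j ≤ bmax})
    (J1 : (Fin N → ℝ) → ℝ)
    (hJ1 : J1 = fun x => ∑ i, (min (PbA i) (PbB i) * max (x i) 0 / ηch -
      max (PsA i) (PsB i) * ηdis * max (-(x i)) 0))
    (F2 : Set ((Fin N → ℝ) × (Fin N → ℝ)))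
    (hF2 : F2 = {p | ∀ i, Xmin ≤ p.1 i ∧ p.1 i ≤ Xmax ∧ Xmin ≤ p.2 i ∧ p.2 i ≤ Xmax ∧
      Xmin ≤ p.1 i + p.2 i ∧ p.1 i + p.2 i ≤ Xmax ∧ p.1 i * p.2 i ≥ 0 ∧
      bmin ≤ b0 + ∑ j ∈ Finset.Iic i, (p.1 j + p.2 j) ∧
      b0 + ∑ j ∈ Finset.Iic i, (p.1 j + p.2 j) ≤ bmax})
    (J2 : (Fin N → ℝ) × (Fin N → ℝ) → ℝ)
    (hJ2 : J2 = fun p => ∑ i,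
      (PbA i * max (p.1 i) 0 / ηch - PsA i * ηdis * max (-(p.1 i)) 0 +
       (PbB i * max (p.2 i) 0 / ηch - PsB i * ηdis * max (-(p.2 i)) 0))) :
    sInf (J2 '' F2) ≤ sInf (J1 '' F1) := by
  change F1 = feasibleK1 Xmin Xmax bmin b0 bmax at hF1
  change F2 = feasibleK2 Xmin Xmax bmin b0 bmax at hF2
  change J1 = costK1 ηch ηdis PbA PsA PbB PsB at hJ1
  change J2 = costK2 ηch ηdis PbA PsA PbB PsB at hJ2
  subst hF1 hJ1 hF2 hJ2
  refine (csInf_eq_csInf_of_forall_exists_le ?_ ?_).le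
  · rintro _ ⟨p, hp, rfl⟩
    have hsign i : 0 ≤ p.1 i * p.2 i := by
      obtain ⟨-, -, -, -, -, -, h, -⟩ := hp i
      exact h
    exact ⟨_, ⟨_, add_mem_feasibleK1 hp, rfl⟩,
      costK1_add_le_costK2 PbA PsA PbB PsB hch.1.le hdis.1.le hsign⟩
  · rintro _ ⟨x, hx, rfl⟩
    obtain ⟨p, hp, hcost⟩ := exists_mem_feasibleK2_costK2_eq PbA PsA PbB PsB hX1 hX2 hx
    exact ⟨_, ⟨p, hp, rfl⟩, hcost.le⟩

/-- The multi-market model K2 achieves at most the cost (at least the revenue)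
of the single-market-per-step model K1: `v_K2 ≤ v_K1`. -/
theorem stmt9 (N : ℕ) (Xmin Xmax bmin b0 bmax ηch ηdis : ℝ)
    (hX1 : Xmin ≤ 0) (hX2 : 0 ≤ Xmax) (hb1 : bmin ≤ b0) (hb2 : b0 ≤ bmax)
    (hch : ηch ∈ Set.Ioc (0 : ℝ) 1) (hdis : ηdis ∈ Set.Ioc (0 : ℝ) 1)
    (PbA PsA PbB PsB : Fin N → ℝ)
    (F1 : Set (Fin N → ℝ))
    (hF1 : F1 = {x | ∀ i, Xmin ≤ x i ∧ x i ≤ Xmax ∧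
      bmin ≤ b0 + ∑ j ∈ Finset.Iic i, x j ∧ b0 + ∑ j ∈ Finset.Iic i, x j ≤ bmax})
    (J1 : (Fin N → ℝ) → ℝ)
    (hJ1 : J1 = fun x => ∑ i, (min (PbA i) (PbB i) * max (x i) 0 / ηch -
      max (PsA i) (PsB i) * ηdis * max (-(x i)) 0))
    (F2 : Set ((Fin N → ℝ) × (Fin N → ℝ)))
    (hF2 : F2 = {p | ∀ i, Xmin ≤ p.1 i ∧ p.1 i ≤ Xmax ∧ Xmin ≤ p.2 i ∧ p.2 i ≤ Xmax ∧
      Xmin ≤ p.1 i + p.2 i ∧ p.1 i + p.2 i ≤ Xmax ∧ p.1 i * p.2 i ≥ 0 ∧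
      bmin ≤ b0 + ∑ j ∈ Finset.Iic i, (p.1 j + p.2 j) ∧
      b0 + ∑ j ∈ Finset.Iic i, (p.1 j + p.2 j) ≤ bmax})
    (J2 : (Fin N → ℝ) × (Fin N → ℝ) → ℝ)
    (hJ2 : J2 = fun p => ∑ i,
      (PbA i * max (p.1 i) 0 / ηch - PsA i * ηdis * max (-(p.1 i)) 0 +
       (PbB i * max (p.2 i) 0 / ηch - PsB i * ηdis * max (-(p.2 i)) 0))) :
    sInf (J2 '' F2) ≤ sInf (J1 '' F1) :=
  stmt9_general N Xmin Xmax bmin b0 bmax ηch ηdis hX1 hX2 hch hdis PbA PsA PbB PsB F1 hF1 J1 hJ1 F2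
    hF2 J2 hJ2
end
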